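/- arXiv:0906.3535 — 2 statements merged into one kernel-verified Lean document; each statement's English description precedes it below -/
import Mathlib

section
/- Let K ≥ 1, let G be a group and V an abelian group, let ρ : G → Aut(V) be an action of G on V by automorphisms, let A be a K-approximate group in G, and let E be a centred finite subset of V with |ρ(A^8)(E+E)| ≤ K|E|, where ρ(B)(F) := {ρ(b)(v) : b ∈ B, v ∈ F}. Then for every ε > 0 there exist a set E' ⊆ ρ(A²)(E) with |E'| ≥ c_K|E| for some constant c_K > 0 depending only on K, and a centred subset A' ⊆ A⁴ with |A'| ≥ c_{K,ε}|A| for some constant c_{K,ε} > 0 depending only on K and ε, such that |ρ(a)(E') \ E'| ≤ ε|E'| for every a ∈ A'. -/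
/-!
Sample `k` elements `t₁, …, t_k` of `A` independently and uniformly. For each `v`, the number of
`i` with `v ∈ tᵢE` has mean `k·H(v)/|A|`, where `H(v)` counts the `a ∈ A` with `v ∈ aE`, and
variance at most `k·H(v)/|A|`. Summing over a set `W ⊇ A²E` of size at most `K|E|`, at least half
of all samples are `L²`-close to the mean on `W`. The translates `a·t` of good samples `t` by
`a ∈ A` lie in `(A²)^k`, a set of at most `(K|A|)^k` tuples, so some `z ∈ (A²)^k` arises in this way
from a set `B ⊆ A` of at least `|A|/(2K^k)` elements `b`, each with `b⁻¹z` good.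

Let `E'` be the set of points lying in more than `θ/|A|` of the translates `zᵢE`; it carries at
least half of their total mass `k|E|`. If `b, b' ∈ B` and `b'b⁻¹` moves `u ∈ E'` out of `E'`, then
at `w = b⁻¹u` the counts of `b⁻¹z` and `b'⁻¹z` lie on opposite sides of `θ`, so either `kH(w)` is
within `Δ` of `θ` or one of the two counts deviates from `kH(w)` by at least `Δ`. Chebyshev's
inequality makes the latter points rare, and `θ` is chosen among `m` well-separated levels so that
few points have `kH` near it. Hence `A' = BB⁻¹ ⊆ A²` moves only an `ε`-fraction of `E'`.
-/

open Pointwise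

/-- A `K`-approximate group: a finite symmetric set containing the identity, with
`A·A ⊆ X·A ⊆ A·X·X` and `A·A ⊆ A·X ⊆ X·X·A` for some set `X` of size at most `K`. -/
def IsApproxGroup {G : Type*} [Group G] (K : ℝ) (A : Set G) : Prop :=
  A.Finite ∧ (1 : G) ∈ A ∧ A⁻¹ = A ∧
    ∃ X : Set G, X.Finite ∧ (X.ncard : ℝ) ≤ K ∧
      A * A ⊆ X * A ∧ X * A ⊆ A * X * X ∧ A * A ⊆ A * X ∧ A * X ⊆ X * X * A

/-- `ρ(B)(F) := {ρ(b)(v) : b ∈ B, v ∈ F}`. -/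
def actImg {G V : Type*} [Group G] [AddCommGroup V] (ρ : G →* Multiplicative (AddAut V))
    (B : Set G) (F : Set V) : Set V :=
  {v | ∃ b ∈ B, ∃ w ∈ F, Multiplicative.toAdd (ρ b) w = v}

open Finset

theorem sum_piFinset_sq_sum_eq {α R : Type*} [CommRing R] (s : Finset α) (g : α → R)
    (hg : ∑ a ∈ s, g a = 0) (k : ℕ) :
    ∑ t ∈ Fintype.piFinset (fun _ : Fin k ↦ s), (∑ i, g (t i)) ^ 2
      = k * #s ^ (k - 1) * ∑ a ∈ s, g a ^ 2 := by
  have moment (i j : Fin k) : ∑ t ∈ Fintype.piFinset (fun _ : Fin k ↦ s), g (t i) * g (t j)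
      = if i = j then #s ^ (k - 1) * ∑ a ∈ s, g a ^ 2 else 0 := by
    split_ifs with hij
    · subst hij
      simp [Fintype.sum_piFinset_apply (fun a ↦ g a * g a), sq]
    · have h := sum_prod_piFinset s (fun l a ↦ if l = i ∨ l = j then g a else 1)
      rw [prod_eq_zero (mem_univ i) (by simp [hg])] at h
      rw [← h]
      refine sum_congr rfl fun t _ ↦ ?_
      rw [prod_eq_mul i j hij (fun c _ hc ↦ if_neg (by tauto)) (by simp) (by simp)]
      simp
  simp_rw [sq, sum_mul_sum]
  rw [sum_comm]
  simp_rw [sum_comm (s := Fintype.piFinset _), moment]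
  simp only [sum_ite_eq, mem_univ, if_true, sum_const, card_univ, Fintype.card_fin, nsmul_eq_mul,
    sq, mul_assoc]

theorem sum_piFinset_sq_sub_le {α R : Type*} [Field R] [LinearOrder R] [IsStrictOrderedRing R]
    (s : Finset α) (f : α → R) (hf : ∀ a ∈ s, f a ∈ Set.Icc (0 : R) 1) (k : ℕ) :
    ∑ t ∈ Fintype.piFinset (fun _ : Fin k ↦ s), (#s * ∑ i, f (t i) - k * ∑ a ∈ s, f a) ^ 2
      ≤ k * #s ^ (k + 1) * ∑ a ∈ s, f a := by
  set n : R := (#s : R)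
  set c := ∑ a ∈ s, f a
  have centred : ∑ a ∈ s, (n * f a - c) = 0 := by
    rw [sum_sub_distrib, ← mul_sum, sum_const, nsmul_eq_mul]; ring
  have sum_sq : ∑ a ∈ s, (n * f a - c) ^ 2 ≤ n ^ 2 * c := by
    have expand : ∑ a ∈ s, (n * f a - c) ^ 2 = n ^ 2 * ∑ a ∈ s, f a ^ 2 - n * c ^ 2 := by
      simp only [sub_sq, sum_add_distrib, sum_sub_distrib, mul_pow, ← sum_mul, ← mul_sum,
        sum_const, nsmul_eq_mul]
      change n ^ 2 * _ - 2 * (n * c) * c + n * c ^ 2 = _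
      ring
    have : ∑ a ∈ s, f a ^ 2 ≤ c := sum_le_sum fun a ha ↦ by
      obtain ⟨h0, h1⟩ := hf a ha
      nlinarith
    rw [expand]
    nlinarith [sq_nonneg c, (by positivity : (0 : R) ≤ n)]
  calc ∑ t ∈ Fintype.piFinset (fun _ : Fin k ↦ s), (n * ∑ i, f (t i) - k * c) ^ 2
      = ∑ t ∈ Fintype.piFinset (fun _ : Fin k ↦ s), (∑ i, (n * f (t i) - c)) ^ 2 := by
        simp [sum_sub_distrib, mul_sum]
    _ = k * n ^ (k - 1) * ∑ a ∈ s, (n * f a - c) ^ 2 := sum_piFinset_sq_sum_eq s _ centred k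
    _ ≤ k * n ^ (k - 1) * (n ^ 2 * c) := by gcongr
    _ = k * n ^ (k + 1) * c := by
      cases k with
      | zero => simp
      | succ k => rw [Nat.add_sub_cancel]; ring

section Counting
variable {ι R : Type*} [Field R] [LinearOrder R] [IsStrictOrderedRing R] (s : Finset ι)

theorem card_filter_le_mul_le_sum {f : ι → R} (hf : ∀ x ∈ s, 0 ≤ f x) (c : R) :
    #{x ∈ s | c ≤ f x} * c ≤ ∑ x ∈ s, f x := by
  calc #{x ∈ s | c ≤ f x} * c ≤ ∑ x ∈ s with c ≤ f x, f x := by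
        simpa using card_nsmul_le_sum _ f c fun x hx ↦ (mem_filter.1 hx).2
    _ ≤ ∑ x ∈ s, f x := sum_le_sum_of_subset_of_nonneg (filter_subset _ _) fun x hx _ ↦ hf x hx

theorem card_le_two_mul_card_filter_le {f : ι → R} (hf : ∀ x ∈ s, 0 ≤ f x) {c : R} (hc : 0 < c)
    (hsum : ∑ x ∈ s, f x ≤ #s * c) : (#s : R) ≤ 2 * #{x ∈ s | f x ≤ 2 * c} := by
  have split : #{x ∈ s | f x ≤ 2 * c} + #{x ∈ s | ¬f x ≤ 2 * c} = #s :=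
    card_filter_add_card_filter_not _
  have bad : #{x ∈ s | ¬f x ≤ 2 * c} ≤ #{x ∈ s | 2 * c ≤ f x} :=
    card_le_card <| monotone_filter_right _ fun x _ h ↦ (not_le.1 h).le
  have : (#{x ∈ s | ¬f x ≤ 2 * c} : R) * (2 * c) ≤ #s * c :=
    le_trans (by gcongr) ((card_filter_le_mul_le_sum s hf (2 * c)).trans hsum)
  have : (#s : R) = #{x ∈ s | f x ≤ 2 * c} + #{x ∈ s | ¬f x ≤ 2 * c} := by exact_mod_cast split.symm
  nlinarith

theorem card_filter_le_abs_mul_sq_le_sum_sq (f : ι → R) {c : R} (hc : 0 ≤ c) :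
    #{x ∈ s | c ≤ |f x|} * c ^ 2 ≤ ∑ x ∈ s, f x ^ 2 := by
  have sub : {x ∈ s | c ≤ |f x|} ⊆ {x ∈ s | c ^ 2 ≤ f x ^ 2} :=
    monotone_filter_right _ fun x _ h ↦ by simpa using pow_le_pow_left₀ hc h 2
  calc (#{x ∈ s | c ≤ |f x|} : R) * c ^ 2 ≤ #{x ∈ s | c ^ 2 ≤ f x ^ 2} * c ^ 2 := by gcongr
    _ ≤ ∑ x ∈ s, f x ^ 2 := card_filter_le_mul_le_sum s (fun x _ ↦ sq_nonneg _) _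

theorem sum_le_card_filter_lt_mul_add {F : ι → R} {M θ : R} (hM : ∀ x ∈ s, F x ≤ M)
    (hθ : 0 ≤ θ) : ∑ x ∈ s, F x ≤ #{x ∈ s | θ < F x} * M + #s * θ := by
  rw [← sum_filter_add_sum_filter_not s (fun x ↦ θ < F x)]
  gcongr
  · simpa using sum_le_card_nsmul _ F M fun x hx ↦ hM x (mem_filter.1 hx).1
  · calc ∑ x ∈ s with ¬θ < F x, F x ≤ #{x ∈ s | ¬θ < F x} * θ := by
          simpa using sum_le_card_nsmul _ F θ fun x hx ↦ not_lt.1 (mem_filter.1 hx).2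
      _ ≤ #s * θ := by gcongr; exact filter_subset _ _

theorem exists_level_card_filter_abs_sub_lt_le (h : ι → R) {Δ : R} (hΔ : 0 < Δ) {m : ℕ}
    (hm : 0 < m) : ∃ θ, 0 ≤ θ ∧ θ ≤ 2 * m * Δ ∧ (m : R) * #{x ∈ s | |h x - θ| < Δ} ≤ #s := by
  classical
  have disjoint : (Icc 1 m : Set ℕ).PairwiseDisjoint
      fun j ↦ {x ∈ s | |h x - 2 * j * Δ| < Δ} := by
    intro i _ j _ hij
    refine disjoint_filter.2 fun x _ hi hj ↦ hij ?_
    rw [abs_lt] at hi hj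
    have hij : (i : R) < j + 1 := by
      by_contra! H; nlinarith [mul_le_mul_of_nonneg_right H hΔ.le]
    have hji : (j : R) < i + 1 := by
      by_contra! H; nlinarith [mul_le_mul_of_nonneg_right H hΔ.le]
    norm_cast at hij hji
    omega
  have total : ∑ j ∈ Icc 1 m, #{x ∈ s | |h x - 2 * j * Δ| < Δ} ≤ #s := by
    rw [← card_biUnion disjoint]
    exact card_le_card (biUnion_subset.2 fun j _ ↦ filter_subset _ _)
  obtain ⟨j, hj, hband⟩ : ∃ j ∈ Icc 1 m, (m : R) * #{x ∈ s | |h x - 2 * j * Δ| < Δ} ≤ #s := by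
    apply exists_le_of_sum_le (nonempty_Icc.2 hm)
    rw [← mul_sum, sum_const, Nat.card_Icc, add_tsub_cancel_right, nsmul_eq_mul]
    gcongr
    exact_mod_cast total
  have hjm : (j : R) ≤ m := by exact_mod_cast (mem_Icc.1 hj).2
  exact ⟨2 * j * Δ, by positivity, by gcongr, hband⟩

theorem card_filter_cross_le (F₁ F₂ h : ι → R) (θ Δ : R) :
    #{x ∈ s | θ < F₁ x ∧ F₂ x ≤ θ} ≤ #{x ∈ s | |h x - θ| < Δ} + #{x ∈ s | Δ ≤ |F₁ x - h x|}
      + #{x ∈ s | Δ ≤ |F₂ x - h x|} := by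
  classical
  calc #{x ∈ s | θ < F₁ x ∧ F₂ x ≤ θ}
      ≤ #({x ∈ s | |h x - θ| < Δ} ∪ {x ∈ s | Δ ≤ |F₁ x - h x|} ∪ {x ∈ s | Δ ≤ |F₂ x - h x|}) := by
        refine card_le_card fun x hx ↦ ?_
        simp only [mem_filter, mem_union] at hx ⊢
        obtain ⟨hs, h₁, h₂⟩ := hx
        simp only [hs, true_and]
        by_contra! hne
        obtain ⟨⟨hband, hdev₁⟩, hdev₂⟩ := hne
        rw [abs_lt] at hdev₁ hdev₂
        rcases le_abs'.1 hband with hb | hb <;> linarith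
    _ ≤ _ := (card_union_le _ _).trans (by gcongr; exact card_union_le _ _)

end Counting

section Translates
variable {G Y ι : Type*} [Group G] [MulAction G Y] [DecidableEq Y]

def translateCount (E : Finset Y) (s : Finset ι) (t : ι → G) (y : Y) : ℕ :=
  #{i ∈ s | (t i)⁻¹ • y ∈ E}

variable {E W : Finset Y} {s : Finset ι} {t : ι → G}

theorem translateCount_le (y : Y) : translateCount E s t y ≤ #s := card_filter_le _ _

theorem translateCount_smul (b : G) (y : Y) :
    translateCount E s (b • t) y = translateCount E s t (b⁻¹ • y) := by
  simp [translateCount, mul_smul]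

theorem exists_mem_smul_of_translateCount_ne_zero {y : Y} (h : translateCount E s t y ≠ 0) :
    ∃ i ∈ s, y ∈ t i • E := by
  obtain ⟨i, hi⟩ := card_ne_zero.1 h
  rw [mem_filter, inv_smul_mem_iff] at hi
  exact ⟨i, hi⟩

theorem translateCount_eq_zero_of_notMem (hW : ∀ i ∈ s, t i • E ⊆ W) {y : Y} (hy : y ∉ W) :
    translateCount E s t y = 0 := by
  by_contra h
  obtain ⟨i, hi, hy'⟩ := exists_mem_smul_of_translateCount_ne_zero h
  exact hy (hW i hi hy')

theorem sum_translateCount (hW : ∀ i ∈ s, t i • E ⊆ W) :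
    ∑ y ∈ W, translateCount E s t y = #s * #E := by
  have fibre (i : ι) (hi : i ∈ s) : #{y ∈ W | (t i)⁻¹ • y ∈ E} = #E := by
    rw [← card_smul_finset (t i) E, filter_congr fun y _ ↦ inv_smul_mem_iff,
      filter_mem_eq_inter, inter_eq_right.2 (hW i hi)]
  simp only [translateCount, card_filter]
  rw [sum_comm]
  simp only [← card_filter]
  rw [sum_congr rfl fibre, sum_const, smul_eq_mul]

theorem exists_card_mul_le_translateCount (A : Finset G) (S Z : Finset Y) (hZ : A • S ⊆ Z)
    (hZne : Z.Nonempty) : ∃ z ∈ Z, #A * #S ≤ #Z * translateCount S A id z := by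
  apply exists_le_of_sum_le hZne
  rw [sum_const, smul_eq_mul, ← mul_sum,
    sum_translateCount (t := id) fun a ha ↦ (smul_finset_subset_smul ha).trans hZ]

theorem card_mul_inv_smul_filter_sdiff_le {α : Type*} [LinearOrder α] (S W : Finset Y)
    (F : Y → α) (θ : α) (b b' : G) (hF : ∀ y ∉ S, F y ≤ θ)
    (hb : ∀ y ∈ S, θ < F y → b⁻¹ • y ∈ W) :
    #((b' * b⁻¹) • {y ∈ S | θ < F y} \ {y ∈ S | θ < F y})
      ≤ #{w ∈ W | θ < F (b • w) ∧ F (b' • w) ≤ θ} := by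
  refine le_trans (card_le_card fun x hx ↦ ?_) (card_image_le (f := (b' • ·)))
  obtain ⟨hx, hxE'⟩ := mem_sdiff.1 hx
  obtain ⟨u, hu, rfl⟩ := mem_smul_finset.1 hx
  obtain ⟨huS, huθ⟩ := mem_filter.1 hu
  refine mem_image.2 ⟨b⁻¹ • u, mem_filter.2 ⟨hb u huS huθ, by rwa [smul_inv_smul], ?_⟩, ?_⟩
  · rw [smul_smul]
    by_contra! hlt
    by_cases hS : (b' * b⁻¹) • u ∈ S
    · exact hxE' (mem_filter.2 ⟨hS, hlt⟩)
    · exact (hF _ hS).not_gt hlt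
  · rw [smul_smul]

end Translates

section NearInvariance
variable {G V : Type*} [Group G] [MulAction G V] [DecidableEq V]
  {A : Finset G} {E W : Finset V} {k : ℕ}

noncomputable def deviation (A : Finset G) (E : Finset V) {k : ℕ} (t : Fin k → G) (v : V) : ℝ :=
  #A * translateCount E univ t v - k * translateCount E A id v

theorem sum_sq_deviation_le (A : Finset G) (E : Finset V) (k : ℕ) (v : V) :
    ∑ t ∈ Fintype.piFinset (fun _ : Fin k ↦ A), deviation A E t v ^ 2
      ≤ k * #A ^ (k + 1) * translateCount E A id v := by
  let f : G → ℝ := fun a ↦ if a⁻¹ • v ∈ E then 1 else 0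
  have key (t : Fin k → G) : deviation A E t v = #A * ∑ i, f (t i) - k * ∑ a ∈ A, f a := by
    simp only [deviation, translateCount, natCast_card_filter, id, f]
  have hH : (translateCount E A id v : ℝ) = ∑ a ∈ A, f a := by
    simp only [translateCount, natCast_card_filter, id, f]
  simp only [key, hH]
  exact sum_piFinset_sq_sub_le A f (fun a _ ↦ by simp only [f]; split_ifs <;> simp) k

theorem sum_sum_sq_deviation_le (hW : A • E ⊆ W) (k : ℕ) :
    ∑ t ∈ Fintype.piFinset (fun _ : Fin k ↦ A), ∑ v ∈ W, deviation A E t v ^ 2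
      ≤ #(Fintype.piFinset fun _ : Fin k ↦ A) * (k * #A ^ 2 * #E) := by
  rw [sum_comm]
  calc _ ≤ ∑ v ∈ W, k * #A ^ (k + 1) * (translateCount E A id v : ℝ) :=
        sum_le_sum fun v _ ↦ sum_sq_deviation_le A E k v
    _ = _ := by
      rw [← mul_sum, ← Nat.cast_sum,
        sum_translateCount (t := id) fun a ha ↦ (smul_finset_subset_smul ha).trans hW,
        Fintype.card_piFinset_const]
      push_cast
      ring

theorem exists_translates_close [DecidableEq G] {K : ℝ} (hK : 0 ≤ K) (hA : A.Nonempty)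
    (hE : E.Nonempty) (hAA : (#(A * A) : ℝ) ≤ K * #A) (hW : A • E ⊆ W) (hk : 0 < k) :
    ∃ z ∈ Fintype.piFinset (fun _ : Fin k ↦ A * A), ∃ B ⊆ A, (#A : ℝ) ≤ 2 * K ^ k * #B ∧
      ∀ b ∈ B, b⁻¹ • z ∈ Fintype.piFinset (fun _ ↦ A) ∧
        ∑ v ∈ W, deviation A E (b⁻¹ • z) v ^ 2 ≤ 2 * (k * #A ^ 2 * #E) := by
  have hc : (0 : ℝ) < k * #A ^ 2 * #E := by
    have := hA.card_pos; have := hE.card_pos; positivity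
  set good := {t ∈ Fintype.piFinset (fun _ : Fin k ↦ A) |
    ∑ v ∈ W, deviation A E t v ^ 2 ≤ 2 * (k * #A ^ 2 * #E)}
  have half : (#A : ℝ) ^ k ≤ 2 * #good := by
    simpa [Fintype.card_piFinset_const] using card_le_two_mul_card_filter_le _
      (fun t _ ↦ sum_nonneg fun v _ ↦ sq_nonneg _) hc (sum_sum_sq_deviation_le hW k)
  have translates : A • good ⊆ Fintype.piFinset (fun _ : Fin k ↦ A * A) := by
    intro x hx
    obtain ⟨a, ha, t, ht, rfl⟩ := mem_smul.1 hx
    exact Fintype.mem_piFinset.2 fun i ↦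
      mul_mem_mul ha (Fintype.mem_piFinset.1 (mem_filter.1 ht).1 i)
  obtain ⟨z, hz, hcount⟩ := exists_card_mul_le_translateCount A good _ translates
    (Fintype.piFinset_nonempty.2 fun _ ↦ hA.mul hA)
  refine ⟨z, hz, {b ∈ A | b⁻¹ • z ∈ good}, filter_subset _ _, ?_,
    fun b hb ↦ mem_filter.1 (mem_filter.1 hb).2⟩
  have hZ : (#(Fintype.piFinset fun _ : Fin k ↦ A * A) : ℝ) ≤ (K * #A) ^ k := by
    rw [Fintype.card_piFinset_const]; push_cast; gcongr
  have : (#A : ℝ) * #good ≤ (K * #A) ^ k * #{b ∈ A | b⁻¹ • z ∈ good} :=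
    calc (#A : ℝ) * #good
        ≤ #(Fintype.piFinset fun _ : Fin k ↦ A * A) * translateCount good A id z := by
          exact_mod_cast hcount
      _ ≤ _ := by gcongr; rfl
  have hpow : (0 : ℝ) < #A ^ k := by have := hA.card_pos; positivity
  rw [mul_pow] at this
  refine le_of_mul_le_mul_right ?_ hpow
  nlinarith

theorem card_le_two_mul_card_filter_lt {K θ : ℝ} (hA : A.Nonempty) (hk : 0 < k)
    {z : Fin k → G} (hz : ∀ i, z i • E ⊆ W) (hWE : (#W : ℝ) ≤ K * #E) (hθ : 0 ≤ θ)
    (hθk : 2 * K * θ ≤ k * #A) :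
    (#E : ℝ) ≤ 2 * #{v ∈ W | θ < #A * translateCount E univ z v} := by
  have total : ∑ v ∈ W, (#A * translateCount E univ z v : ℝ) = #A * k * #E := by
    rw [← mul_sum, ← Nat.cast_sum, sum_translateCount fun i _ ↦ hz i]
    simp [mul_assoc]
  have bound := sum_le_card_filter_lt_mul_add W
    (F := fun v ↦ (#A * translateCount E univ z v : ℝ)) (M := #A * k) (fun v _ ↦ by
      gcongr; simpa using translateCount_le (E := E) (s := univ) (t := z) v) hθ
  have hWθ : (#W : ℝ) * θ ≤ #E * (k * #A) / 2 := by
    calc (#W : ℝ) * θ ≤ K * #E * θ := by gcongr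
      _ = #E * (2 * K * θ) / 2 := by ring
      _ ≤ #E * (k * #A) / 2 := by gcongr
  have hnk : (0 : ℝ) < #A * k := by have := hA.card_pos; positivity
  rw [total] at bound
  nlinarith

theorem card_smul_sdiff_le_card_band_add {z : Fin k → G} (hAE : A • E ⊆ W)
    (hz : ∀ i, z i • E ⊆ W) {b b' : G} {θ : ℝ} (hθ : 0 ≤ θ)
    (hb : b⁻¹ • z ∈ Fintype.piFinset (fun _ ↦ A)) (Δ : ℝ) :
    #((b' * b⁻¹) • {v ∈ W | θ < #A * translateCount E univ z v}
        \ {v ∈ W | θ < #A * translateCount E univ z v})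
      ≤ #{w ∈ W | |k * translateCount E A id w - θ| < Δ}
        + #{w ∈ W | Δ ≤ |deviation A E (b⁻¹ • z) w|}
        + #{w ∈ W | Δ ≤ |deviation A E (b'⁻¹ • z) w|} := by
  set F : V → ℝ := fun v ↦ #A * translateCount E univ z v
  have shift (c : G) (w : V) :
      deviation A E (c⁻¹ • z) w = F (c • w) - k * translateCount E A id w := by
    simp [deviation, translateCount_smul, F]
  have outside (v : V) (hv : v ∉ W) : F v ≤ θ := by
    simp [F, translateCount_eq_zero_of_notMem (fun i _ ↦ hz i) hv, hθ]
  have inside (v : V) (_ : v ∈ W) (hv : θ < F v) : b⁻¹ • v ∈ W := by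
    have : translateCount E univ (b⁻¹ • z) (b⁻¹ • v) ≠ 0 := by
      rw [translateCount_smul, inv_inv, smul_inv_smul]
      intro h0; simp only [F, h0, Nat.cast_zero, mul_zero] at hv; linarith
    obtain ⟨i, -, hi⟩ := exists_mem_smul_of_translateCount_ne_zero this
    exact hAE (smul_finset_subset_smul (Fintype.mem_piFinset.1 hb i) hi)
  simp_rw [shift]
  exact (card_mul_inv_smul_filter_sdiff_le W W F θ b b' outside inside).trans
    (card_filter_cross_le W _ _ _ θ Δ)

theorem card_filter_le_abs_deviation_le {K ε : ℝ} {m : ℕ} (hK : 0 < K) (hm : 0 < m)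
    (hk : 256 * K ^ 2 * m ^ 2 ≤ k * ε) (hA : A.Nonempty) {t : Fin k → G}
    (ht : ∑ v ∈ W, deviation A E t v ^ 2 ≤ 2 * (k * #A ^ 2 * #E)) :
    (#{w ∈ W | k * #A / (4 * K * m) ≤ |deviation A E t w|} : ℝ) ≤ ε * #E / 8 := by
  have hm' : (0 : ℝ) < m := by exact_mod_cast hm
  have hk' : (0 : ℝ) < k := by
    rcases k.eq_zero_or_pos with h | h
    · subst h; simp only [Nat.cast_zero, zero_mul] at hk; nlinarith [pow_pos hK 2, pow_pos hm' 2]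
    · exact_mod_cast h
  set Δ : ℝ := k * #A / (4 * K * m)
  have hΔ : 0 < Δ := by have := hA.card_pos; positivity
  have hΔsq : Δ ^ 2 * (16 * K ^ 2 * m ^ 2) = k ^ 2 * #A ^ 2 := by
    simp only [Δ]; field_simp; ring
  have chebyshev := (card_filter_le_abs_mul_sq_le_sum_sq W (deviation A E t) hΔ.le).trans ht
  refine le_of_mul_le_mul_right ?_ (by positivity : (0 : ℝ) < Δ ^ 2 * (16 * K ^ 2 * m ^ 2))
  calc _ ≤ 2 * (k * #A ^ 2 * #E) * (16 * K ^ 2 * m ^ 2) := by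
        rw [← mul_assoc]; gcongr
    _ = 256 * K ^ 2 * m ^ 2 * (k * #A ^ 2 * #E) / 8 := by ring
    _ ≤ k * ε * (k * #A ^ 2 * #E) / 8 := by gcongr
    _ = ε * #E / 8 * (Δ ^ 2 * (16 * K ^ 2 * m ^ 2)) := by rw [hΔsq]; ring

/-- `k` is the number of sampled translates and `m` the number of candidate thresholds. -/
theorem exists_near_invariant_finset [DecidableEq G] {K ε : ℝ} (hK : 0 < K) {m k : ℕ}
    (hm : 4 * K ≤ m * ε) (hk : 256 * K ^ 2 * m ^ 2 ≤ k * ε) (hA : 1 ∈ A) (hE : E.Nonempty)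
    (hAA : (#(A * A) : ℝ) ≤ K * #A) (hW : (A * A) • E ⊆ W) (hWE : (#W : ℝ) ≤ K * #E) :
    ∃ E' ⊆ (A * A) • E, (#E : ℝ) ≤ 2 * #E' ∧ ∃ B ⊆ A, B.Nonempty ∧ (#A : ℝ) ≤ 2 * K ^ k * #B ∧
      ∀ g ∈ B * B⁻¹, (#(g • E' \ E') : ℝ) ≤ ε * #E' := by
  have hmε : 0 < (m : ℝ) * ε := by linarith
  have hε : 0 < ε := pos_of_mul_pos_right hmε m.cast_nonneg
  have hm0 : 0 < m := Nat.cast_pos (α := ℝ) |>.1 <| pos_of_mul_pos_left hmε hε.le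
  have hk0 : 0 < k := Nat.cast_pos (α := ℝ) |>.1 <|
    pos_of_mul_pos_left (lt_of_lt_of_le (by positivity) hk) hε.le
  have hAE : A • E ⊆ W := (smul_subset_smul_right (subset_mul_left A hA)).trans hW
  obtain ⟨z, hz, B, hBA, hBcard, hclose⟩ := exists_translates_close hK.le ⟨1, hA⟩ hE hAA hAE hk0
  have hzW (i : Fin k) : z i • E ⊆ W :=
    (smul_finset_subset_smul (Fintype.mem_piFinset.1 hz i)).trans hW
  set Δ : ℝ := k * #A / (4 * K * m)
  have hΔ : 0 < Δ := by have := card_pos.2 ⟨1, hA⟩; positivity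
  obtain ⟨θ, hθ, hθm, hband⟩ := exists_level_card_filter_abs_sub_lt_le W
    (fun w ↦ (k * translateCount E A id w : ℝ)) hΔ hm0
  have hband' : (#{w ∈ W | |k * translateCount E A id w - θ| < Δ} : ℝ) ≤ ε * #E / 4 := by
    refine le_of_mul_le_mul_left ?_ (Nat.cast_pos.2 hm0 : (0 : ℝ) < m)
    nlinarith [card_pos.2 hE]
  have hθk : 2 * K * θ ≤ k * #A := by
    calc 2 * K * θ ≤ 4 * K * m * Δ := by nlinarith
      _ = k * #A := by simp only [Δ]; field_simp
  have hE' := card_le_two_mul_card_filter_lt ⟨1, hA⟩ hk0 hzW hWE hθ hθk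
  refine ⟨_, fun v hv ↦ ?_, hE', B, hBA, card_pos.1 ?_, hBcard, fun g hg ↦ ?_⟩
  · have : translateCount E univ z v ≠ 0 := fun h0 ↦ by
      have := (mem_filter.1 hv).2; simp only [h0, Nat.cast_zero, mul_zero] at this; linarith
    obtain ⟨i, -, hi⟩ := exists_mem_smul_of_translateCount_ne_zero this
    exact smul_finset_subset_smul (Fintype.mem_piFinset.1 hz i) hi
  · have := (Nat.cast_pos.2 (card_pos.2 ⟨1, hA⟩) : (0 : ℝ) < #A).trans_le hBcard
    exact_mod_cast pos_of_mul_pos_right this (by positivity)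
  · obtain ⟨b', hb', _, hc, rfl⟩ := mem_mul.1 hg
    obtain ⟨b, hb, rfl⟩ := mem_inv.1 hc
    have escape := Nat.cast_le (α := ℝ) |>.2 <|
      card_smul_sdiff_le_card_band_add (b' := b') hAE hzW hθ (hclose b hb).1 Δ
    push_cast at escape
    have dev := card_filter_le_abs_deviation_le hK hm0 hk ⟨1, hA⟩ (hclose b hb).2
    have dev' := card_filter_le_abs_deviation_le hK hm0 hk ⟨1, hA⟩ (hclose b' hb').2
    linarith [mul_le_mul_of_nonneg_left hE' hε.le]

end NearInvariance

theorem IsApproxGroup.ncard_mul_le {G : Type*} [Group G] {K : ℝ} {A : Set G}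
    (hA : IsApproxGroup K A) : ((A * A).ncard : ℝ) ≤ K * A.ncard := by
  obtain ⟨hAfin, -, -, X, hXfin, hXK, hAAX, -⟩ := hA
  have hXA : (X * A).ncard ≤ X.ncard * A.ncard := by
    simpa only [Nat.card_coe_set_eq] using Set.natCard_mul_le (s := X) (t := A)
  calc ((A * A).ncard : ℝ) ≤ X.ncard * A.ncard := by
        exact_mod_cast (Set.ncard_le_ncard hAAX (hXfin.mul hAfin)).trans hXA
    _ ≤ K * A.ncard := by gcongr

theorem IsApproxGroup.exists_near_invariant {G V : Type*} [Group G] [MulAction G V] {K ε : ℝ}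
    (hK : 0 < K) {m k : ℕ} (hm : 4 * K ≤ m * ε) (hk : 256 * K ^ 2 * m ^ 2 ≤ k * ε) {A : Set G}
    {E W : Set V} (hA : IsApproxGroup K A) (hE : E.Finite) (hE0 : E.Nonempty) (hW : W.Finite)
    (hAEW : (A * A) • E ⊆ W) (hWE : (W.ncard : ℝ) ≤ K * E.ncard) :
    ∃ E' ⊆ (A * A) • E, (E.ncard : ℝ) ≤ 2 * E'.ncard ∧
      ∃ A' ⊆ A * A, 1 ∈ A' ∧ A'⁻¹ = A' ∧ (A.ncard : ℝ) ≤ 2 * K ^ k * A'.ncard ∧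
        ∀ a ∈ A', ((a • E' \ E').ncard : ℝ) ≤ ε * E'.ncard := by
  classical
  have hAA := hA.ncard_mul_le
  obtain ⟨hAfin, h1A, hAinv, -⟩ := hA
  obtain ⟨A, rfl⟩ := hAfin.exists_finset_coe
  obtain ⟨E, rfl⟩ := hE.exists_finset_coe
  obtain ⟨W, rfl⟩ := hW.exists_finset_coe
  rw [← coe_mul, Set.ncard_coe_finset, Set.ncard_coe_finset] at hAA
  rw [Set.ncard_coe_finset, Set.ncard_coe_finset] at hWE
  rw [← coe_inv, coe_inj] at hAinv
  rw [← coe_mul, ← coe_smul, coe_subset] at hAEW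
  obtain ⟨E', hE'A, hE', B, hBA, hB, hBcard, hinv⟩ :=
    exists_near_invariant_finset hK hm hk h1A (coe_nonempty.1 hE0) hAA hAEW hWE
  refine ⟨E', by rw [← coe_mul, ← coe_smul]; exact coe_subset.2 hE'A, by simpa using hE',
    ↑(B * B⁻¹), ?_, ?_, ?_, ?_, fun a ha ↦ ?_⟩
  · rw [← coe_mul, coe_subset]
    exact (mul_subset_mul hBA (inv_subset_inv hBA)).trans (by rw [hAinv])
  · obtain ⟨b, hb⟩ := hB
    exact mul_inv_cancel b ▸ mul_mem_mul hb (inv_mem_inv hb)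
  · rw [← coe_inv, mul_inv_rev, inv_inv]
  · have : (#B : ℝ) ≤ #(B * B⁻¹) := by exact_mod_cast card_le_card_mul_right hB.inv
    rw [Set.ncard_coe_finset, Set.ncard_coe_finset]
    exact hBcard.trans (by gcongr)
  · rw [← coe_smul_finset, ← coe_sdiff, Set.ncard_coe_finset, Set.ncard_coe_finset]
    exact hinv a ha

/-- **Existence of a near-invariant set.** -/
theorem near_invariant_set (K : ℝ) (hK : 1 ≤ K) :
    ∃ cK : ℝ, 0 < cK ∧
      ∀ ε : ℝ, 0 < ε →
        ∃ cKε : ℝ, 0 < cKε ∧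
          ∀ (G V : Type) [Group G] [AddCommGroup V] (ρ : G →* Multiplicative (AddAut V))
            (A : Set G) (E : Set V),
            IsApproxGroup K A → E.Finite → (0 : V) ∈ E → -E = E →
            ((actImg ρ (A ^ 8) (E + E)).ncard : ℝ) ≤ K * E.ncard →
            ∃ E' : Set V, E' ⊆ actImg ρ (A ^ 2) E ∧ cK * E.ncard ≤ E'.ncard ∧
              ∃ A' : Set G, A' ⊆ A ^ 4 ∧ (1 : G) ∈ A' ∧ A'⁻¹ = A' ∧
                cKε * A.ncard ≤ A'.ncard ∧
                ∀ a ∈ A', ((((Multiplicative.toAdd (ρ a) : AddAut V) '' E') \ E').ncard : ℝ) ≤ ε * E'.ncard := by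
  refine ⟨1 / 2, by norm_num, fun ε hε ↦ ?_⟩
  obtain ⟨m, hm⟩ := Archimedean.arch (4 * K) hε
  obtain ⟨k, hk⟩ := Archimedean.arch (256 * K ^ 2 * m ^ 2) hε
  rw [nsmul_eq_mul] at hm hk
  refine ⟨(2 * K ^ k)⁻¹, by positivity, fun G V _ _ ρ A E hA hE h0E _ hcard ↦ ?_⟩
  let _ : MulAction G V := MulAction.compHom V ρ
  have actImg_eq (B : Set G) (F : Set V) : actImg ρ B F = B • F := rfl
  have hA8 : (A ^ 8).Finite := by
    classical
    rw [← hA.1.coe_toFinset, ← Finset.coe_pow]; exact Finset.finite_toSet _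
  have hsq (n : ℕ) (hn : 2 ≤ n) : A * A ⊆ A ^ n := by
    rw [← pow_two]; exact Set.pow_subset_pow_right hA.2.1 hn
  obtain ⟨E', hE'A, hE', A', hA'A, h1A', hA'inv, hA'card, hinv⟩ :=
    hA.exists_near_invariant (by linarith) hm hk hE ⟨0, h0E⟩ (hA8.smul (hE.add hE))
      (Set.smul_subset_smul (hsq 8 (by norm_num)) (Set.subset_add_left E h0E)) hcard
  refine ⟨E', by rwa [actImg_eq, pow_two], by linarith, A', hA'A.trans (hsq 4 (by norm_num)),
    h1A', hA'inv, ?_, hinv⟩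
  rw [inv_mul_le_iff₀ (by positivity)]
  exact hA'card
end

section
/- Let K ≥ 1 and k ≥ 3, let π : G̃ → G be a surjective group homomorphism, and let Ã be a K-approximate group in G̃. Then there exist constants c, C > 0 depending only on K and k such that for every h ∈ π(Ã), c·|Ã|/|π(Ã)| ≤ |π⁻¹({h}) ∩ Ã^k| ≤ C·|Ã|/|π(Ã)|. -/
open Pointwise

/-!
For `a ∈ Ã`, left multiplication by `a` maps `ker π ∩ Ã^n` into the fibre over `π a` in `Ã^(n+1)`,
and multiplication by `a⁻¹` maps that fibre into `ker π ∩ Ã^(n+2)`; so every fibre is comparable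
to `ker π ∩ Ã^n`. A section of `π` over `π(Ã)` gives `|Ã| ≤ |π(Ã)| · |ker π ∩ Ã²|` and
`|π(Ã)| · |ker π ∩ Ã^n| ≤ |Ã^(n+1)|`, and `|Ã^(n+1)| ≤ K^n |Ã|` closes the gap.
-/

lemma Set.Finite.pow {M : Type*} [Monoid M] {s : Set M} (hs : s.Finite) (n : ℕ) :
    (s ^ n).Finite := by
  classical
  lift s to Finset M using hs
  rw [← Finset.coe_pow]
  exact Finset.finite_toSet _

namespace MonoidHom

variable {G H : Type*} [Group G] [Group H] (π : G →* H)

lemma smul_preimage_singleton_inter_subset {a : G} {S T : Set G} (h : H) (ha : a ∈ S) :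
    a • (π ⁻¹' {h} ∩ T) ⊆ π ⁻¹' {π a * h} ∩ (S * T) := by
  rintro _ ⟨x, ⟨hx, hxT⟩, rfl⟩
  simp only [Set.mem_preimage, Set.mem_singleton_iff] at hx
  exact ⟨by simp [hx], Set.mul_mem_mul ha hxT⟩

lemma ncard_preimage_singleton_inter_le {a : G} {S T : Set G} (h : H) (ha : a ∈ S)
    (hST : (S * T).Finite) :
    (π ⁻¹' {h} ∩ T).ncard ≤ (π ⁻¹' {π a * h} ∩ (S * T)).ncard := by
  rw [← Set.ncard_smul_set a]
  exact Set.ncard_le_ncard (π.smul_preimage_singleton_inter_subset h ha)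
    (hST.subset Set.inter_subset_right)

lemma ncard_le_ncard_image_mul_ncard_ker {A : Set G} (hA : A.Finite) :
    A.ncard ≤ (π '' A).ncard * (π ⁻¹' {1} ∩ (A⁻¹ * A)).ncard := by
  set σ := Function.invFunOn π A
  have hσ : ∀ x ∈ A, σ (π x) ∈ A ∧ π (σ (π x)) = π x := fun x hx =>
    ⟨Function.invFunOn_mem ⟨x, hx, rfl⟩, Function.invFunOn_eq ⟨x, hx, rfl⟩⟩
  rw [← Set.ncard_prod]
  refine Set.ncard_le_ncard_of_injOn (fun x => (π x, (σ (π x))⁻¹ * x)) ?_ ?_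
    ((hA.image π).prod ((hA.inv.mul hA).subset Set.inter_subset_right))
  · intro x hx
    exact ⟨Set.mem_image_of_mem π hx, by simp [(hσ x hx).2],
      Set.mul_mem_mul (Set.inv_mem_inv.2 (hσ x hx).1) hx⟩
  · intro x _ y _ hxy
    simp only [Prod.mk.injEq] at hxy
    rw [hxy.1] at hxy
    exact mul_left_cancel hxy.2

lemma ncard_image_mul_ncard_ker_le {S T : Set G} (hST : (S * T).Finite) :
    (π '' S).ncard * (π ⁻¹' {1} ∩ T).ncard ≤ (S * T).ncard := by
  set σ := Function.invFunOn π S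
  have hσ : ∀ s ∈ S, π (σ (π s)) = π s := fun s hs => Function.invFunOn_eq ⟨s, hs, rfl⟩
  rw [← Set.ncard_prod]
  refine Set.ncard_le_ncard_of_injOn (fun p => σ p.1 * p.2) ?_ ?_ hST
  · rintro ⟨_, x⟩ ⟨⟨s, hs, rfl⟩, -, hx⟩
    exact Set.mul_mem_mul (Function.invFunOn_mem ⟨s, hs, rfl⟩) hx
  · rintro ⟨_, x⟩ ⟨⟨s, hs, rfl⟩, hx, -⟩ ⟨_, y⟩ ⟨⟨t, ht, rfl⟩, hy, -⟩ hxy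
    simp only [Set.mem_preimage, Set.mem_singleton_iff] at hx hy
    have hst : π s = π t := by
      simpa [hx, hy, hσ s hs, hσ t ht] using congrArg π hxy
    simp only [hst] at hxy ⊢
    rw [mul_left_cancel hxy]

variable {A : Set G} {a : G}

lemma ncard_le_ncard_image_mul_ncard_fibre (h1 : 1 ∈ A) (hinv : A⁻¹ = A) (hfin : A.Finite)
    (ha : a ∈ A) {n : ℕ} (hn : 3 ≤ n) :
    A.ncard ≤ (π '' A).ncard * (π ⁻¹' {π a} ∩ A ^ n).ncard := by
  obtain ⟨m, rfl⟩ : ∃ m, n = m + 1 := ⟨n - 1, by omega⟩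
  have hker : (π ⁻¹' {1} ∩ A ^ 2).ncard ≤ (π ⁻¹' {1} ∩ A ^ m).ncard :=
    Set.ncard_le_ncard (Set.inter_subset_inter_right _ (Set.pow_subset_pow_right h1 (by omega)))
      ((hfin.pow m).subset Set.inter_subset_right)
  have hfibre := π.ncard_preimage_singleton_inter_le 1 ha (T := A ^ m)
    (by rw [← pow_succ']; exact hfin.pow _)
  rw [mul_one, ← pow_succ'] at hfibre
  calc A.ncard ≤ (π '' A).ncard * (π ⁻¹' {1} ∩ (A⁻¹ * A)).ncard :=
        π.ncard_le_ncard_image_mul_ncard_ker hfin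
    _ ≤ (π '' A).ncard * (π ⁻¹' {π a} ∩ A ^ (m + 1)).ncard := by
        rw [hinv, ← sq]
        exact Nat.mul_le_mul_left _ (hker.trans hfibre)

lemma ncard_image_mul_ncard_fibre_le (hinv : A⁻¹ = A) (hfin : A.Finite) (ha : a ∈ A) (n : ℕ) :
    (π '' A).ncard * (π ⁻¹' {π a} ∩ A ^ n).ncard ≤ (A ^ (n + 2)).ncard := by
  have ha' : a⁻¹ ∈ A := by rw [← hinv]; exact Set.inv_mem_inv.2 ha
  have hfibre := π.ncard_preimage_singleton_inter_le (π a) ha' (T := A ^ n)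
    (by rw [← pow_succ']; exact hfin.pow _)
  rw [map_inv, inv_mul_cancel, ← pow_succ'] at hfibre
  calc (π '' A).ncard * (π ⁻¹' {π a} ∩ A ^ n).ncard
      ≤ (π '' A).ncard * (π ⁻¹' {1} ∩ A ^ (n + 1)).ncard := Nat.mul_le_mul_left _ hfibre
    _ ≤ (A * A ^ (n + 1)).ncard :=
        π.ncard_image_mul_ncard_ker_le (by rw [← pow_succ']; exact hfin.pow _)
    _ = (A ^ (n + 2)).ncard := by rw [← pow_succ']

end MonoidHom

lemma IsApproxGroup.isApproximateSubgroup {G : Type*} [Group G] {K : ℝ} {A : Set G}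
    (hA : IsApproxGroup K A) : IsApproximateSubgroup K A := by
  obtain ⟨-, h1, hinv, X, hX, hXK, hsq, -⟩ := hA
  refine ⟨h1, hinv, hX.toFinset, ?_, ?_⟩
  · rwa [← Set.ncard_eq_toFinset_card X hX]
  · rw [Set.Finite.coe_toFinset, smul_eq_mul, sq]
    exact hsq

lemma IsApproximateSubgroup.ncard_pow_le {G : Type*} [Group G] {K : ℝ} {A : Set G}
    (hA : IsApproximateSubgroup K A) (hfin : A.Finite) (n : ℕ) :
    ((A ^ (n + 1)).ncard : ℝ) ≤ K ^ n * A.ncard := by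
  classical
  lift A to Finset G using hfin
  rw [← Finset.coe_pow, Set.ncard_coe_finset, Set.ncard_coe_finset]
  simpa using hA.card_pow_le (n := n + 1)

/-- **Projection lemma, fibre count.** -/
theorem projection_lemma_fibres (K : ℝ) (hK : 1 ≤ K) (k : ℕ) (hk : 3 ≤ k) :
    ∃ c C : ℝ, 0 < c ∧ 0 < C ∧
      ∀ (G₁ G₂ : Type) [Group G₁] [Group G₂] (π : G₁ →* G₂), Function.Surjective π →
        ∀ A : Set G₁, IsApproxGroup K A →
          ∀ h ∈ π '' A,
            c * (A.ncard : ℝ) / ((π '' A).ncard : ℝ) ≤ ((π ⁻¹' {h} ∩ A ^ k).ncard : ℝ) ∧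
            ((π ⁻¹' {h} ∩ A ^ k).ncard : ℝ) ≤ C * (A.ncard : ℝ) / ((π '' A).ncard : ℝ) := by
  refine ⟨1, K ^ (k + 1), one_pos, by positivity, ?_⟩
  rintro G₁ G₂ _ _ π - A hA _ ⟨a, ha, rfl⟩
  have growth := hA.isApproximateSubgroup.ncard_pow_le hA.1 (k + 1)
  obtain ⟨hfin, h1, hinv, -⟩ := hA
  have himage : (0 : ℝ) < (π '' A).ncard := by
    exact_mod_cast (Set.ncard_pos (hfin.image π)).2 ⟨π a, a, ha, rfl⟩
  have lower : (A.ncard : ℝ) ≤ (π '' A).ncard * (π ⁻¹' {π a} ∩ A ^ k).ncard := by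
    exact_mod_cast π.ncard_le_ncard_image_mul_ncard_fibre h1 hinv hfin ha hk
  have upper : ((π '' A).ncard * (π ⁻¹' {π a} ∩ A ^ k).ncard : ℝ) ≤ (A ^ (k + 2)).ncard := by
    exact_mod_cast π.ncard_image_mul_ncard_fibre_le hinv hfin ha k
  constructor
  · rw [one_mul, div_le_iff₀ himage]
    linarith
  · rw [le_div_iff₀ himage]
    linarith
end
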